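/- There exists N such that for every even n ≥ N the following holds: if G is a typical simple 3-regular graph on n vertices and (V1, V2) is a minimal bisection of G, then for each i ∈ {1, 2} there exists d ∈ {1, 2, 3, 4} and a collection of at least n/10⁷ pairwise disjoint pairs {u, w} of distinct vertices of V_i such that both u and w have degree two in G[V_i], the distance between u and w in G[V_i] equals d, and there is a path of length d from u to w in G[V_i] all of whose d − 1 internal vertices have degree three in G[V_i]. -/

import Mathlib

open SimpleGraph

/-- The number of edges of `G` with one endpoint in `V1` and the other in `V2`. -/
noncomputable def cutSize {V : Type*} (G : SimpleGraph V) (V1 V2 : Set V) : ℕ :=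
  {p : V × V | p.1 ∈ V1 ∧ p.2 ∈ V2 ∧ G.Adj p.1 p.2}.ncard

/-- `(V1, V2)` is a bisection: a partition of the vertex set into two parts of equal size. -/
def IsBisection {V : Type*} (V1 V2 : Set V) : Prop :=
  V1 ∪ V2 = Set.univ ∧ Disjoint V1 V2 ∧ V1.ncard = V2.ncard

/-- The bisection width of `G`: the minimum size of a bisection. -/
noncomputable def bisectionWidth {V : Type*} (G : SimpleGraph V) : ℕ :=
  sInf {m : ℕ | ∃ V1 V2 : Set V, IsBisection V1 V2 ∧ cutSize G V1 V2 = m}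

/-- A minimal bisection: a bisection whose size equals the bisection width. -/
def IsMinimalBisection {V : Type*} (G : SimpleGraph V) (V1 V2 : Set V) : Prop :=
  IsBisection V1 V2 ∧ cutSize G V1 V2 = bisectionWidth G

/-- `G` is (simple) 3-regular: every vertex has exactly 3 neighbours. -/
def IsCubic {V : Type*} (G : SimpleGraph V) : Prop :=
  ∀ v : V, (G.neighborSet v).ncard = 3

/-- `v` lies on a cycle of length `ℓ` in `G`. -/
def OnCycleOfLength {V : Type*} (G : SimpleGraph V) (ℓ : ℕ) (v : V) : Prop :=
  ∃ (u : V) (w : G.Walk u u), w.IsCycle ∧ w.length = ℓ ∧ v ∈ w.support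

/-- A 3-regular graph on `n` vertices is typical if its bisection width is at least `0.10·n`
and, for every `ℓ ≤ 20`, at most `log n` vertices lie on a cycle of length `ℓ`. -/
def Typical {n : ℕ} (G : SimpleGraph (Fin n)) : Prop :=
  (0.10 * (n : ℝ) ≤ (bisectionWidth G : ℝ)) ∧
  ∀ ℓ : ℕ, ℓ ≤ 20 → (({v : Fin n | OnCycleOfLength G ℓ v}).ncard : ℝ) ≤ Real.log n

/-- The degree of a vertex of the induced subgraph `G[S]`. -/
noncomputable def inducedDegree {V : Type*} (G : SimpleGraph V) (S : Set V) (v : S) : ℕ :=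
  ((G.induce S).neighborSet v).ncard

/-- The conclusion for one side `S`: there is some `d ∈ {1,2,3,4}` and a collection of at
least `n/10⁷` pairwise disjoint pairs of distinct vertices of degree two in `G[S]` at
distance exactly `d`, joined by a path of length `d` all of whose internal vertices have
degree three in `G[S]`. -/
def HasManyGoodPairs {V : Type*} (G : SimpleGraph V) (S : Set V) (n : ℕ) : Prop :=
  ∃ d : ℕ, 1 ≤ d ∧ d ≤ 4 ∧
    ∃ P : Set (S × S),
      (n : ℝ) / 10 ^ 7 ≤ (P.ncard : ℝ) ∧
      (∀ p ∈ P, p.1 ≠ p.2 ∧ inducedDegree G S p.1 = 2 ∧ inducedDegree G S p.2 = 2 ∧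
        (G.induce S).Reachable p.1 p.2 ∧ (G.induce S).dist p.1 p.2 = d ∧
        ∃ w : (G.induce S).Walk p.1 p.2, w.IsPath ∧ w.length = d ∧
          ∀ x ∈ w.support, x ≠ p.1 → x ≠ p.2 → inducedDegree G S x = 3) ∧
      (∀ p ∈ P, ∀ q ∈ P, p ≠ q →
        ({p.1, p.2} : Set S) ∩ ({q.1, q.2} : Set S) = ∅)

/-!
In a minimal bisection `(S, T)` of a cubic graph, the `≥ n/10` cut edges leave `S` from vertices
of degree below three in `G[S]`. Swapping a few such vertices between the sides shows that `S` has
fewer than twenty vertices of degree at most one in `G[S]`: otherwise `T` has at most one, so by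
counting `G[T]` contains a path of length at most four between two vertices of degree below three,
and exchanging its vertices against low-degree vertices of `S` would shrink the cut. Hence `G[S]`
has about `n/10` vertices of degree two. Those lying on no 3- or 4-cycle and having no other vertex
of degree below three within distance four have disjoint radius-two balls of seven vertices, so
there are at most `n/14` of them, and by typicality few vertices lie on short cycles. Each of the
remaining `Ω(n)` degree-two vertices has a nearest vertex of degree below three, which has degree
two and is reached by a geodesic through degree-three vertices. Balls of radius four have at most
`121` vertices, so a greedy choice makes a positive fraction of these pairs disjoint, and the most
frequent distance `d ∈ {1, …, 4}` keeps a quarter of them.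
-/

open Finset

namespace SimpleGraph

variable {V : Type*} (G : SimpleGraph V) [DecidableRel G.Adj]

def degIn (Y : Finset V) (v : V) : ℕ := #{w ∈ Y | G.Adj v w}

lemma card_interedges_eq_sum_degIn (X Y : Finset V) :
    #(G.interedges X Y) = ∑ x ∈ X, G.degIn Y x := by
  simp only [interedges_def, card_filter, sum_product, degIn]

lemma card_interedges_comm (X Y : Finset V) : #(G.interedges X Y) = #(G.interedges Y X) :=
  have : Std.Symm G.Adj := ⟨fun _ _ h => h.symm⟩
  Rel.card_interedges_comm X Y

lemma card_interedges_eq_zero {X Y : Finset V} (h : ∀ x ∈ X, ∀ y ∈ Y, ¬ G.Adj x y) :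
    #(G.interedges X Y) = 0 := by
  simp only [interedges_def, card_eq_zero, filter_eq_empty_iff, mem_product]
  exact fun e he => h _ he.1 _ he.2

lemma degIn_le_degree [Fintype V] (Y : Finset V) (v : V) : G.degIn Y v ≤ G.degree v := by
  rw [← card_neighborFinset_eq_degree]
  exact card_le_card fun w hw => by simpa using (mem_filter.1 hw).2

lemma degIn_univ [Fintype V] (v : V) : G.degIn univ v = G.degree v := by
  rw [← card_neighborFinset_eq_degree, degIn]
  congr 1
  ext
  simp

variable [DecidableEq V]

lemma degIn_union {Y Y' : Finset V} (h : Disjoint Y Y') (v : V) :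
    G.degIn (Y ∪ Y') v = G.degIn Y v + G.degIn Y' v := by
  rw [degIn, filter_union, card_union_of_disjoint (disjoint_filter_filter h), degIn, degIn]

lemma card_interedges_union_left {X X' : Finset V} (h : Disjoint X X') (Y : Finset V) :
    #(G.interedges (X ∪ X') Y) = #(G.interedges X Y) + #(G.interedges X' Y) := by
  simp only [card_interedges_eq_sum_degIn, sum_union h]

lemma card_interedges_union_right (X : Finset V) {Y Y' : Finset V} (h : Disjoint Y Y') :
    #(G.interedges X (Y ∪ Y')) = #(G.interedges X Y) + #(G.interedges X Y') := by
  rw [card_interedges_comm, card_interedges_union_left G h, card_interedges_comm,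
    card_interedges_comm G Y']

lemma card_interedges_sdiff_add (X : Finset V) {Y Y' : Finset V} (h : Y' ⊆ Y) :
    #(G.interedges X (Y \ Y')) + #(G.interedges X Y') = #(G.interedges X Y) := by
  rw [← card_interedges_union_right G X sdiff_disjoint, sdiff_union_of_subset h]

lemma Walk.IsPath.two_mul_length_le_card_interedges {u v : V} {p : G.Walk u v} (hp : p.IsPath) :
    2 * p.length ≤ #(G.interedges p.support.toFinset p.support.toFinset) := by
  induction p with
  | nil => simp
  | @cons u x _ hux q ih =>
    rw [Walk.cons_isPath_iff] at hp
    set Q := q.support.toFinset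
    have hu : u ∉ Q := by simpa [Q] using hp.2
    have hx : x ∈ Q := by simp [Q]
    have hsub : insert (u, x) (insert (x, u) (G.interedges Q Q)) ⊆
        G.interedges (insert u Q) (insert u Q) := by
      intro e he
      rw [mem_interedges_iff, mem_insert, mem_insert]
      simp only [mem_insert, mem_interedges_iff] at he
      rcases he with rfl | rfl | ⟨he₁, he₂, he⟩
      · exact ⟨.inl rfl, .inr hx, hux⟩
      · exact ⟨.inr hx, .inl rfl, hux.symm⟩
      · exact ⟨.inr he₁, .inr he₂, he⟩
    have hcard := card_le_card hsub
    rw [card_insert_of_notMem, card_insert_of_notMem] at hcard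
    · simp only [Walk.support_cons, List.toFinset_cons, Walk.length_cons]
      linarith [ih hp.1]
    · simp [mem_interedges_iff, hu]
    · simp [mem_interedges_iff, hu, hux.ne]

end SimpleGraph

section Bisection

variable {V : Type*} {G : SimpleGraph V}

lemma cutSize_coe_finset [DecidableRel G.Adj] (X Y : Finset V) :
    cutSize G X Y = #(G.interedges X Y) := by
  rw [cutSize, ← Set.ncard_coe_finset, interedges_def]
  congr 1
  ext
  simp [and_assoc]

lemma cutSize_comm (V1 V2 : Set V) : cutSize G V1 V2 = cutSize G V2 V1 := by
  rw [cutSize, cutSize, ← Set.ncard_image_of_injective _ Prod.swap_injective]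
  congr 1
  ext ⟨a, b⟩
  simp [and_left_comm, G.adj_comm]

lemma IsBisection.symm {V1 V2 : Set V} (h : IsBisection V1 V2) : IsBisection V2 V1 :=
  ⟨Set.union_comm V1 V2 ▸ h.1, h.2.1.symm, h.2.2.symm⟩

lemma IsMinimalBisection.symm {V1 V2 : Set V} (h : IsMinimalBisection G V1 V2) :
    IsMinimalBisection G V2 V1 :=
  ⟨h.1.symm, cutSize_comm V2 V1 ▸ h.2⟩

lemma IsMinimalBisection.card_interedges_eq [DecidableRel G.Adj] {S T : Finset V}
    (h : IsMinimalBisection G S T) : #(G.interedges S T) = bisectionWidth G := by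
  rw [← cutSize_coe_finset, h.2]

variable [Fintype V] [DecidableEq V] {S T : Finset V}

lemma isBisection_coe_iff :
    IsBisection (S : Set V) T ↔ S ∪ T = univ ∧ Disjoint S T ∧ #S = #T := by
  simp only [IsBisection, ← coe_union, coe_eq_univ, disjoint_coe, Set.ncard_coe_finset]

lemma IsBisection.two_mul_card_eq (h : IsBisection (S : Set V) T) :
    2 * #S = Fintype.card V := by
  obtain ⟨hunion, hdisj, hcard⟩ := isBisection_coe_iff.1 h
  rw [← card_univ, ← hunion, card_union_of_disjoint hdisj, hcard, two_mul]

lemma IsBisection.swap (h : IsBisection (S : Set V) T) {A B : Finset V} (hA : A ⊆ S)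
    (hB : B ⊆ T) (hAB : #A = #B) : IsBisection (↑(S \ A ∪ B) : Set V) ↑(T \ B ∪ A) := by
  obtain ⟨hunion, hdisj, hcard⟩ := isBisection_coe_iff.1 h
  refine isBisection_coe_iff.2 ⟨?_, ?_, ?_⟩
  · rw [eq_univ_iff_forall] at hunion ⊢
    intro x
    have := hunion x
    simp only [mem_union, mem_sdiff] at this ⊢
    tauto
  · simp only [disjoint_union_left, disjoint_union_right]
    exact ⟨⟨hdisj.mono sdiff_subset sdiff_subset, disjoint_sdiff⟩, sdiff_disjoint,
      (hdisj.mono hA hB).symm⟩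
  · rw [card_union_of_disjoint (hdisj.mono sdiff_subset hB),
      card_union_of_disjoint ((hdisj.mono hA sdiff_subset).symm), card_sdiff_of_subset hA,
      card_sdiff_of_subset hB]
    have := card_le_card hA
    have := card_le_card hB
    omega

variable [DecidableRel G.Adj]

/-- This is `cut(S, T) ≤ cut(S \ A ∪ B, T \ B ∪ A)` with the common terms cancelled. -/
lemma IsMinimalBisection.swap_le (h : IsMinimalBisection G S T) {A B : Finset V}
    (hA : A ⊆ S) (hB : B ⊆ T) (hAB : #A = #B) :
    #(G.interedges A (T \ B)) + #(G.interedges B (S \ A)) ≤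
      #(G.interedges A (S \ A)) + #(G.interedges B (T \ B)) := by
  have hdisj := (isBisection_coe_iff.1 h.1).2.1
  have hle : bisectionWidth G ≤ cutSize G ↑(S \ A ∪ B) ↑(T \ B ∪ A) :=
    Nat.sInf_le ⟨_, _, h.1.swap hA hB hAB, rfl⟩
  rw [← h.card_interedges_eq, cutSize_coe_finset] at hle
  conv at hle => lhs; rw [← sdiff_union_of_subset hA, ← sdiff_union_of_subset hB]
  have hAB' : Disjoint (T \ B) A := (hdisj.mono hA sdiff_subset).symm
  rw [card_interedges_union_left _ sdiff_disjoint,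
    card_interedges_union_left _ (hdisj.mono sdiff_subset hB),
    card_interedges_union_right _ _ sdiff_disjoint, card_interedges_union_right _ _ sdiff_disjoint,
    card_interedges_union_right _ _ hAB', card_interedges_union_right _ _ hAB'] at hle
  have := G.card_interedges_comm (S \ A) B
  have := G.card_interedges_comm (S \ A) A
  have := G.card_interedges_comm A B
  omega

end Bisection

section Cubic

variable {V : Type*} [Fintype V] {G : SimpleGraph V} [DecidableRel G.Adj]

lemma IsCubic.degree_eq (hG : IsCubic G) (v : V) : G.degree v = 3 := by
  rw [← card_neighborSet_eq_degree, ← hG v, Set.ncard_eq_toFinset_card', Set.toFinset_card]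

variable [DecidableEq V] {S T : Finset V}

lemma IsCubic.degIn_add_degIn (hG : IsCubic G) (h : IsBisection (S : Set V) T) (v : V) :
    G.degIn S v + G.degIn T v = 3 := by
  obtain ⟨hunion, hdisj, -⟩ := isBisection_coe_iff.1 h
  rw [← degIn_union G hdisj, hunion, degIn_univ, hG.degree_eq]

lemma IsCubic.card_interedges_add (hG : IsCubic G) (h : IsBisection (S : Set V) T)
    (B : Finset V) : #(G.interedges B S) + #(G.interedges B T) = 3 * #B := by
  simp only [card_interedges_eq_sum_degIn, ← sum_add_distrib, hG.degIn_add_degIn h, sum_const,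
    smul_eq_mul, mul_comm]

/-- Swapping `A` and `B` lowers the cut by at least `#B + e(B, S) - e(B, T \ B)`, since every
vertex of `A` sends at most one edge into `S` and none into `B`. -/
lemma IsMinimalBisection.card_add_card_interedges_le (hG : IsCubic G)
    (h : IsMinimalBisection G S T) {A B : Finset V} (hA : A ⊆ S) (hB : B ⊆ T) (hAB : #A = #B)
    (hlow : ∀ a ∈ A, G.degIn S a ≤ 1) (hnadj : ∀ a ∈ A, ∀ b ∈ B, ¬ G.Adj a b) :
    #B + #(G.interedges B S) ≤ #(G.interedges B (T \ B)) := by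
  have hswap := h.swap_le hA hB hAB
  have hAT := card_interedges_sdiff_add G A hB
  have hBS := card_interedges_sdiff_add G B hA
  rw [card_interedges_eq_zero G hnadj] at hAT
  rw [card_interedges_eq_zero G fun b hb a ha hba => hnadj a ha b hb hba.symm] at hBS
  have hAS : #(G.interedges A (S \ A)) ≤ #(G.interedges A S) :=
    card_le_card (interedges_mono G subset_rfl sdiff_subset)
  have hlowS : #(G.interedges A S) ≤ #A := by
    rw [card_interedges_eq_sum_degIn, card_eq_sum_ones]
    exact sum_le_sum hlow
  have hsum := hG.card_interedges_add h.1 A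
  omega

lemma IsMinimalBisection.card_add_le_of_four_mul_le (hG : IsCubic G)
    (h : IsMinimalBisection G S T) {B : Finset V} (hB : B ⊆ T)
    (hL : 4 * #B ≤ #{a ∈ S | G.degIn S a ≤ 1}) :
    #B + #(G.interedges B S) ≤ #(G.interedges B (T \ B)) := by
  set N := B.biUnion fun b => G.neighborFinset b
  have hN : #N ≤ 3 * #B := card_biUnion_le.trans (by simp [hG.degree_eq, mul_comm])
  obtain ⟨A, hA, hAcard⟩ := exists_subset_card_eq (s := {a ∈ S | G.degIn S a ≤ 1} \ N)
    (n := #B) (by have := le_card_sdiff N {a ∈ S | G.degIn S a ≤ 1}; omega)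
  have hA' : ∀ a ∈ A, (a ∈ S ∧ G.degIn S a ≤ 1) ∧ a ∉ N := fun a ha => by
    simpa using hA ha
  refine h.card_add_card_interedges_le hG (fun a ha => (hA' a ha).1.1) hB hAcard
    (fun a ha => (hA' a ha).1.2) fun a ha b hb hab => (hA' a ha).2 ?_
  exact mem_biUnion.2 ⟨b, hb, by simpa using hab.symm⟩

lemma IsMinimalBisection.card_lowDeg_le_one (hG : IsCubic G) (h : IsMinimalBisection G S T)
    (hS : 8 ≤ #{a ∈ S | G.degIn S a ≤ 1}) : #{b ∈ T | G.degIn T b ≤ 1} ≤ 1 := by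
  by_contra! hT
  obtain ⟨B, hB, hBcard⟩ := exists_subset_card_eq hT
  have hex := h.card_add_le_of_four_mul_le hG (hB.trans (filter_subset _ _)) (by omega)
  have hBT : #(G.interedges B T) ≤ #B := by
    rw [card_interedges_eq_sum_degIn, card_eq_sum_ones]
    exact sum_le_sum fun b hb => (mem_filter.1 (hB hb)).2
  have hsplit := card_interedges_sdiff_add G B (hB.trans (filter_subset _ _))
  have hsum := hG.card_interedges_add h.1 B
  omega

lemma IsMinimalBisection.card_lowDeg_lt_of_isPath (hG : IsCubic G)
    (h : IsMinimalBisection G S T) {v w : V} {p : G.Walk v w} (hp : p.IsPath) (hvw : v ≠ w)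
    (hlen : p.length ≤ 4) (hT : ∀ x ∈ p.support, x ∈ T) (hv : G.degIn T v ≤ 2)
    (hw : G.degIn T w ≤ 2) : #{a ∈ S | G.degIn S a ≤ 1} < 20 := by
  by_contra! hS
  set B := p.support.toFinset
  have hBcard : #B = p.length + 1 := by
    rw [List.toFinset_card_of_nodup hp.support_nodup, Walk.length_support]
  have hBT : B ⊆ T := fun x hx => hT x (List.mem_toFinset.1 hx)
  have hex := h.card_add_le_of_four_mul_le hG hBT (by omega)
  have hsplit := card_interedges_sdiff_add G B hBT
  have hinner : 2 * p.length ≤ #(G.interedges B B) := hp.two_mul_length_le_card_interedges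
  have hsum := hG.card_interedges_add h.1 B
  have hends : 2 ≤ #(G.interedges B S) := by
    have := hG.degIn_add_degIn h.1 v
    have := hG.degIn_add_degIn h.1 w
    rw [card_interedges_eq_sum_degIn]
    calc 2 ≤ G.degIn S v + G.degIn S w := by omega
      _ = ∑ x ∈ {v, w}, G.degIn S x := (sum_pair hvw).symm
      _ ≤ ∑ x ∈ B, G.degIn S x := sum_le_sum_of_subset (by simp [insert_subset_iff, B])
  -- `e(B, T \ B) ≤ 3 #B - e(B, S) - 2 (#B - 1)`, so the exchange bound forces `e(B, S) ≤ 1`.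
  omega

end Cubic

namespace SimpleGraph

section Cycles

variable {W : Type*} {H : SimpleGraph W}

lemma onCycleOfLength_three {u x y : W} (hux : H.Adj u x) (hxy : H.Adj x y) (hyu : H.Adj y u) :
    OnCycleOfLength H 3 u := by
  refine ⟨u, .cons hux (.cons hxy (.cons hyu .nil)), ?_, rfl, by simp⟩
  have := hux.ne; have := hxy.ne; have := hyu.ne
  simp [Walk.isCycle_def]
  aesop

lemma onCycleOfLength_four {u x y z : W} (hux : H.Adj u x) (hxy : H.Adj x y) (hyz : H.Adj y z)
    (hzu : H.Adj z u) (huy : u ≠ y) (hxz : x ≠ z) : OnCycleOfLength H 4 u := by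
  refine ⟨u, .cons hux (.cons hxy (.cons hyz (.cons hzu .nil))), ?_, rfl, by simp⟩
  have := hux.ne; have := hxy.ne; have := hyz.ne; have := hzu.ne
  simp [Walk.isCycle_def]
  aesop

lemma OnCycleOfLength.map {W' : Type*} {H' : SimpleGraph W'} (f : H ↪g H') {ℓ : ℕ} {v : W}
    (h : OnCycleOfLength H ℓ v) : OnCycleOfLength H' ℓ (f v) := by
  obtain ⟨u, c, hc, hl, hv⟩ := h
  exact ⟨f u, c.map f.toHom, hc.map f.injective, by simpa using hl,
    by simpa [Walk.support_map] using hv⟩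

end Cycles

end SimpleGraph

namespace Finset

variable {α : Type*} [DecidableEq α]

lemma exists_subset_pairwise_not_rel (r : α → α → Prop) [DecidableRel r]
    (hr : ∀ x y, r x y → r y x) (X : Finset α) {c : ℕ} (hc : ∀ x ∈ X, #{y ∈ X | r x y} ≤ c) :
    ∃ M ⊆ X, (M : Set α).Pairwise (fun x y => ¬ r x y) ∧ #X ≤ (c + 1) * #M := by
  induction X using Finset.strongInduction with
  | H X ih =>
  rcases X.eq_empty_or_nonempty with rfl | ⟨x, hx⟩
  · exact ⟨∅, by simp⟩
  set R := insert x {y ∈ X | r x y}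
  have hRX : R ⊆ X := insert_subset hx (filter_subset _ _)
  obtain ⟨M, hM, hpw, hcard⟩ := ih (X \ R) (sdiff_ssubset hRX (by simp [R])) fun y hy =>
    (card_le_card (filter_subset_filter _ sdiff_subset)).trans (hc y (sdiff_subset hy))
  have hMR : ∀ y ∈ M, y ∉ R := fun y hy => (mem_sdiff.1 (hM hy)).2
  refine ⟨insert x M, insert_subset hx (hM.trans sdiff_subset), ?_, ?_⟩
  · rw [coe_insert]
    refine hpw.insert fun y hy _ => ?_
    have hxy : ¬ r x y := fun hxy =>
      hMR y hy (mem_insert_of_mem (mem_filter.2 ⟨sdiff_subset (hM hy), hxy⟩))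
    exact ⟨hxy, fun hyx => hxy (hr y x hyx)⟩
  · rw [card_insert_of_notMem fun h => hMR x h (mem_insert_self _ _)]
    have := card_sdiff_add_card_eq_card hRX
    have := (card_insert_le x {y ∈ X | r x y}).trans (Nat.succ_le_succ (hc x hx))
    nlinarith

lemma exists_subset_pairwise_disjoint_pairs (f : α → α) (X : Finset α) {m : ℕ}
    (hm : ∀ y, #{x ∈ X | f x = y} ≤ m) :
    ∃ M ⊆ X, (M : Set α).Pairwise (fun x y => Disjoint ({x, f x} : Set α) {y, f y}) ∧
      #X ≤ (2 * m + 3) * #M := by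
  classical
  obtain ⟨M, hMX, hpw, hcard⟩ := exists_subset_pairwise_not_rel
    (fun x y => ¬ Disjoint ({x, f x} : Set α) {y, f y}) (fun _ _ h h' => h h'.symm) X
    (c := 2 * m + 2) fun x _ => by
      calc #{y ∈ X | ¬ Disjoint ({x, f x} : Set α) {y, f y}}
          ≤ #({x, f x} ∪ {y ∈ X | f y = x} ∪ {y ∈ X | f y = f x}) := by
            refine card_le_card fun y hy => ?_
            simp only [mem_filter, Set.disjoint_insert_left, Set.disjoint_insert_right,
              Set.disjoint_singleton, Set.mem_insert_iff, Set.mem_singleton_iff] at hy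
            simp only [mem_union, mem_insert, mem_singleton, mem_filter]
            tauto
        _ ≤ 2 + m + m := by
            refine (card_union_le _ _).trans (add_le_add ((card_union_le _ _).trans
              (add_le_add card_le_two (hm x))) (hm (f x)))
        _ = 2 * m + 2 := by ring
  exact ⟨M, hMX, fun x hx y hy hxy => not_not.1 (hpw hx hy hxy), by linarith⟩

end Finset

namespace SimpleGraph

def IsGoodPair {W : Type*} [Fintype W] (H : SimpleGraph W) [DecidableRel H.Adj] (d : ℕ)
    (v w : W) : Prop :=
  v ≠ w ∧ H.degree v = 2 ∧ H.degree w = 2 ∧ H.Reachable v w ∧ H.dist v w = d ∧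
    ∃ p : H.Walk v w, p.IsPath ∧ p.length = d ∧
      ∀ x ∈ p.support, x ≠ v → x ≠ w → H.degree x = 3

variable {W : Type*} [Fintype W] {H : SimpleGraph W}

lemma exists_isPath_to_nearest {P : W → Prop} {v u : W} {k : ℕ} (huv : u ≠ v) (hu : P u)
    (hvu : H.edist v u ≤ k) :
    ∃ w, w ≠ v ∧ P w ∧ H.edist v w ≤ k ∧ H.Reachable v w ∧ ∃ p : H.Walk v w, p.IsPath ∧
      p.length = H.dist v w ∧ ∀ x ∈ p.support, x ≠ v → x ≠ w → ¬ P x := by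
  classical
  obtain ⟨w, hw, hmin⟩ := exists_min_image ({w | w ≠ v ∧ P w ∧ H.edist v w ≤ k} : Finset W)
    (H.edist v) ⟨u, by simp [huv, hu, hvu]⟩
  simp only [mem_filter, mem_univ, true_and] at hw hmin
  obtain ⟨hwv, hPw, hvw⟩ := hw
  have hreach : H.Reachable v w := reachable_of_edist_ne_top (ne_top_of_le_ne_top (by simp) hvw)
  obtain ⟨p, hp, hlen⟩ := hreach.exists_path_of_dist
  refine ⟨w, hwv, hPw, hvw, hreach, p, hp, hlen, fun x hx hxv hxw hPx => ?_⟩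
  have hlt : H.edist v x < H.edist v w := by
    calc H.edist v x ≤ (p.takeUntil x hx).length := edist_le _
      _ < p.length := by exact_mod_cast Walk.length_takeUntil_lt_length hx hxw
      _ = H.edist v w := by rw [hlen, hreach.coe_dist_eq_edist]
  exact (hmin x ⟨hxv, hPx, hlt.le.trans hvw⟩).not_gt hlt

/-- The nearest vertex of degree other than three is a good partner of `v`. -/
lemma exists_isGoodPair [DecidableRel H.Adj] (hΔ : ∀ v, H.degree v ≤ 3) {v : W}
    (hv : H.degree v = 2) (hdefect : ∃ u ≠ v, H.degree u ≠ 3 ∧ H.edist v u ≤ 4)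
    (hlow : ∀ u, H.edist v u ≤ 4 → 2 ≤ H.degree u) :
    ∃ w, IsGoodPair H (H.dist v w) v w ∧ H.dist v w ≤ 4 := by
  obtain ⟨u, huv, hu, hvu⟩ := hdefect
  obtain ⟨w, hwv, hw, hvw, hreach, p, hp, hlen, hinner⟩ :=
    exists_isPath_to_nearest (P := fun u => H.degree u ≠ 3) (k := 4) huv hu hvu
  have hw2 : H.degree w = 2 := by have := hlow w hvw; have := hΔ w; omega
  refine ⟨w, ⟨hwv.symm, hv, hw2, hreach, rfl, p, hp, hlen, fun x hx h₁ h₂ => ?_⟩, ?_⟩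
  · exact not_not.1 (hinner x hx h₁ h₂)
  · rw [← hreach.coe_dist_eq_edist] at hvw
    exact_mod_cast hvw

variable [DecidableEq W]

lemma sum_card_edist_le_le_card {X : Finset W} {r : ℕ}
    (hX : ∀ v ∈ X, ∀ w ∈ X, v ≠ w → 2 * (r : ℕ∞) < H.edist v w) :
    ∑ v ∈ X, #{u | H.edist v u ≤ r} ≤ Fintype.card W := by
  rw [← card_biUnion]
  · exact card_le_univ _
  intro v hv w hw hvw
  rw [Function.onFun, Finset.disjoint_left]
  intro u hvu hwu
  refine (hX v hv w hw hvw).not_ge ?_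
  simp only [mem_filter, mem_univ, true_and] at hvu hwu
  calc H.edist v w ≤ H.edist v u + H.edist u w := H.edist_triangle
    _ ≤ r + r := add_le_add hvu (H.edist_comm ▸ hwu)
    _ = 2 * r := (two_mul _).symm

variable [DecidableRel H.Adj]

lemma card_edist_le_le_sum_pow {Δ : ℕ} (hΔ : ∀ v, H.degree v ≤ Δ) (k : ℕ) (v : W) :
    #{u | H.edist v u ≤ k} ≤ ∑ i ∈ range (k + 1), Δ ^ i := by
  induction k generalizing v with
  | zero =>
    refine (card_le_card (t := {v}) fun u hu => mem_singleton.2 ?_).trans (by simp)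
    have : H.edist v u = 0 := by simpa using (mem_filter.1 hu).2
    exact (edist_eq_zero_iff.1 this).symm
  | succ k ih =>
    have hsub : ({u | H.edist v u ≤ ↑(k + 1)} : Finset W) ⊆
        insert v ((H.neighborFinset v).biUnion fun x => {u | H.edist x u ≤ k}) := by
      intro u hu
      rw [mem_filter] at hu
      obtain ⟨p, hp⟩ := exists_walk_of_edist_ne_top (ne_top_of_le_ne_top (by simp) hu.2)
      cases p with
      | nil => exact mem_insert_self _ _
      | cons hadj q =>
        refine mem_insert_of_mem (mem_biUnion.2 ⟨_, (mem_neighborFinset _ _ _).2 hadj, ?_⟩)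
        have hq : q.length ≤ k := by
          have := hu.2
          rw [← hp, Walk.length_cons] at this
          norm_cast at this
          omega
        exact mem_filter.2 ⟨mem_univ _, (edist_le q).trans (by exact_mod_cast hq)⟩
    calc #{u | H.edist v u ≤ ↑(k + 1)}
        ≤ 1 + ∑ x ∈ H.neighborFinset v, #{u | H.edist x u ≤ k} := by
          refine (card_le_card hsub).trans ((card_insert_le _ _).trans ?_)
          rw [add_comm]
          gcongr
          exact card_biUnion_le
      _ ≤ 1 + H.degree v * ∑ i ∈ range (k + 1), Δ ^ i := by
          rw [← card_neighborFinset_eq_degree, ← smul_eq_mul, ← sum_const]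
          gcongr with x
          exact ih x
      _ ≤ 1 + Δ * ∑ i ∈ range (k + 1), Δ ^ i := by gcongr; exact hΔ v
      _ = ∑ i ∈ range (k + 2), Δ ^ i := by
          rw [sum_range_succ' _ (k + 1), mul_sum]
          simp [pow_succ', add_comm]

lemma seven_le_card_edist_le_two {v : W} (hv : H.degree v = 2)
    (hnbr : ∀ x, H.Adj v x → H.degree x = 3) (h3 : ¬ OnCycleOfLength H 3 v)
    (h4 : ¬ OnCycleOfLength H 4 v) : 7 ≤ #{u | H.edist v u ≤ 2} := by
  rw [← card_neighborFinset_eq_degree, card_eq_two] at hv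
  obtain ⟨x, y, hxy, hN⟩ := hv
  have hx : H.Adj v x := by simp [← mem_neighborFinset, hN]
  have hy : H.Adj v y := by simp [← mem_neighborFinset, hN]
  have hnxy : ¬ H.Adj x y := fun h => h3 (onCycleOfLength_three hx h hy.symm)
  have hinter : H.neighborFinset x ∩ H.neighborFinset y = {v} := by
    ext u
    simp only [mem_inter, mem_neighborFinset, mem_singleton]
    refine ⟨fun ⟨hxu, hyu⟩ => ?_, by rintro rfl; exact ⟨hx.symm, hy.symm⟩⟩
    by_contra huv
    exact h4 (onCycleOfLength_four hx hxu hyu.symm hy.symm (Ne.symm huv) hxy)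
  have hunion : #(H.neighborFinset x ∪ H.neighborFinset y) = 5 := by
    have := card_union_add_card_inter (H.neighborFinset x) (H.neighborFinset y)
    rw [hinter, card_neighborFinset_eq_degree, card_neighborFinset_eq_degree, hnbr x hx,
      hnbr y hy, card_singleton] at this
    omega
  have hdisj : Disjoint ({x, y} : Finset W) (H.neighborFinset x ∪ H.neighborFinset y) := by
    have hnyx : ¬ H.Adj y x := fun h => hnxy h.symm
    simp [hnxy, hnyx]
  have hsub : {x, y} ∪ (H.neighborFinset x ∪ H.neighborFinset y) ⊆
      ({u | H.edist v u ≤ 2} : Finset W) := by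
    intro u hu
    simp only [mem_union, mem_insert, mem_singleton, mem_neighborFinset] at hu
    refine mem_filter.2 ⟨mem_univ _, ?_⟩
    rcases hu with (rfl | rfl) | hxu | hyu
    · exact (edist_le hx.toWalk).trans (by simp)
    · exact (edist_le hy.toWalk).trans (by simp)
    · exact (edist_le (.cons hx hxu.toWalk)).trans (by simp)
    · exact (edist_le (.cons hy hyu.toWalk)).trans (by simp)
  calc 7 = #({x, y} ∪ (H.neighborFinset x ∪ H.neighborFinset y)) := by
        rw [card_union_of_disjoint hdisj, card_pair hxy, hunion]
    _ ≤ _ := card_le_card hsub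

lemma seven_mul_card_le_of_isolated {X : Finset W}
    (hX : ∀ v ∈ X, H.degree v = 2 ∧ ¬ OnCycleOfLength H 3 v ∧ ¬ OnCycleOfLength H 4 v ∧
      ∀ u ≠ v, H.edist v u ≤ 4 → H.degree u = 3) :
    7 * #X ≤ Fintype.card W := by
  calc 7 * #X = ∑ v ∈ X, 7 := by rw [sum_const, smul_eq_mul, mul_comm]
    _ ≤ ∑ v ∈ X, #{u | H.edist v u ≤ (2 : ℕ)} := sum_le_sum fun v hv => by
        obtain ⟨hv2, h3, h4, hiso⟩ := hX v hv
        exact seven_le_card_edist_le_two hv2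
          (fun x hx => hiso x hx.ne' ((edist_le hx.toWalk).trans (by simp))) h3 h4
    _ ≤ Fintype.card W := sum_card_edist_le_le_card fun v hv w hw hvw => by
        by_contra! h
        have := (hX v hv).2.2.2 w hvw.symm (by norm_num at h ⊢; exact h)
        have := (hX w hw).1
        omega

lemma seven_mul_card_degree_eq_two_le :
    7 * #{v | H.degree v = 2} ≤
      7 * {v | OnCycleOfLength H 3 v ∨ OnCycleOfLength H 4 v}.ncard + Fintype.card W +
        7 * #{v | H.degree v = 2 ∧ ∃ u ≠ v, H.degree u ≠ 3 ∧ H.edist v u ≤ 4} := by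
  classical
  set C : Finset W := {v | OnCycleOfLength H 3 v ∨ OnCycleOfLength H 4 v}
  set I : Finset W := {v | H.degree v = 2 ∧ ¬ (OnCycleOfLength H 3 v ∨ OnCycleOfLength H 4 v) ∧
    ∀ u ≠ v, H.edist v u ≤ 4 → H.degree u = 3}
  set Y : Finset W := {v | H.degree v = 2 ∧ ∃ u ≠ v, H.degree u ≠ 3 ∧ H.edist v u ≤ 4}
  have hcover : ({v | H.degree v = 2} : Finset W) ⊆ C ∪ I ∪ Y := by
    intro v hv
    simp only [C, I, Y, mem_union, mem_filter, mem_univ, true_and] at hv ⊢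
    by_cases hc : OnCycleOfLength H 3 v ∨ OnCycleOfLength H 4 v
    · tauto
    by_cases hy : ∃ u ≠ v, H.degree u ≠ 3 ∧ H.edist v u ≤ 4
    · tauto
    push Not at hy
    exact .inl (.inr ⟨hv, hc, fun u huv hle => by_contra fun h3 => (hy u huv h3).not_ge hle⟩)
  have hI : 7 * #I ≤ Fintype.card W := seven_mul_card_le_of_isolated fun v hv => by
    simpa [I, not_or, and_assoc] using hv
  have hC : #C = {v | OnCycleOfLength H 3 v ∨ OnCycleOfLength H 4 v}.ncard := by
    rw [← Set.ncard_coe_finset]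
    congr 1
    ext
    simp [C]
  have := card_le_card hcover
  have := card_union_le (C ∪ I) Y
  have := card_union_le C I
  omega

lemma card_edist_le_four_le (hΔ : ∀ v, H.degree v ≤ 3) (v : W) :
    #{u | H.edist v u ≤ (4 : ℕ)} ≤ 121 := by
  simpa [sum_range_succ] using card_edist_le_le_sum_pow hΔ 4 v

lemma card_edist_le_four_of_degree_le_one_le (hΔ : ∀ v, H.degree v ≤ 3) :
    #{v | ∃ u, H.degree u ≤ 1 ∧ H.edist v u ≤ 4} ≤ 121 * #{u | H.degree u ≤ 1} := by
  calc #{v | ∃ u, H.degree u ≤ 1 ∧ H.edist v u ≤ 4}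
      ≤ #(({u | H.degree u ≤ 1} : Finset W).biUnion fun u => {v | H.edist u v ≤ (4 : ℕ)}) := by
        refine card_le_card fun v hv => ?_
        obtain ⟨u, hu, huv⟩ := (mem_filter.1 hv).2
        exact mem_biUnion.2 ⟨u, by simpa using hu, by simpa [edist_comm] using huv⟩
    _ ≤ ∑ u ∈ ({u | H.degree u ≤ 1} : Finset W), #{v | H.edist u v ≤ (4 : ℕ)} :=
        card_biUnion_le
    _ ≤ ∑ u ∈ ({u | H.degree u ≤ 1} : Finset W), 121 :=
        sum_le_sum fun u _ => card_edist_le_four_le hΔ u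
    _ = 121 * #{u | H.degree u ≤ 1} := by rw [sum_const, smul_eq_mul, mul_comm]

lemma card_degree_eq_two_near_defect_le (hΔ : ∀ v, H.degree v ≤ 3) :
    #{v | H.degree v = 2 ∧ ∃ u ≠ v, H.degree u ≠ 3 ∧ H.edist v u ≤ 4} ≤
      #{v | H.degree v = 2 ∧ (∃ u ≠ v, H.degree u ≠ 3 ∧ H.edist v u ≤ 4) ∧
        ∀ u, H.edist v u ≤ 4 → 2 ≤ H.degree u} + 121 * #{u | H.degree u ≤ 1} := by
  refine (card_le_card fun v hv => ?_).trans ((card_union_le _ _).trans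
    (add_le_add le_rfl (card_edist_le_four_of_degree_le_one_le hΔ)))
  simp only [mem_union, mem_filter, mem_univ, true_and] at hv ⊢
  by_cases hlow : ∃ u, H.degree u ≤ 1 ∧ H.edist v u ≤ 4
  · exact .inr hlow
  · push Not at hlow
    exact .inl ⟨hv.1, hv.2, fun u hu => not_le.1 fun h => (hlow u h).not_ge hu⟩

/-- The constant is `4 · (2 · 121 + 3)`: the fibres of `f` lie in balls of radius four, and there
are four possible distances. -/
lemma exists_many_isGoodPair (hΔ : ∀ v, H.degree v ≤ 3) {X : Finset W} (f : W → W)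
    (hf : ∀ v ∈ X, IsGoodPair H (H.dist v (f v)) v (f v) ∧ H.dist v (f v) ≤ 4) :
    ∃ d, 1 ≤ d ∧ d ≤ 4 ∧ ∃ P : Finset (W × W), (#X : ℝ) / 980 ≤ #P ∧
      (∀ p ∈ P, IsGoodPair H d p.1 p.2) ∧
      (P : Set (W × W)).Pairwise fun p q => Disjoint ({p.1, p.2} : Set W) {q.1, q.2} := by
  have hfiber : ∀ y, #{x ∈ X | f x = y} ≤ 121 := fun y => by
    refine (card_le_card fun x hx => ?_).trans (card_edist_le_four_le hΔ y)
    obtain ⟨hxX, rfl⟩ := mem_filter.1 hx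
    obtain ⟨⟨-, -, -, hreach, -⟩, hle⟩ := hf x hxX
    rw [mem_filter, edist_comm, ← hreach.coe_dist_eq_edist]
    exact ⟨mem_univ _, by exact_mod_cast hle⟩
  obtain ⟨M, hMX, hpw, hMcard⟩ := exists_subset_pairwise_disjoint_pairs f X hfiber
  have hdist : ∀ x ∈ M, H.dist x (f x) ∈ Icc 1 4 := fun x hx => by
    obtain ⟨⟨hne, -, -, hreach, -⟩, hle⟩ := hf x (hMX hx)
    exact mem_Icc.2 ⟨hreach.pos_dist_of_ne hne, hle⟩
  obtain ⟨d, hd, hdcard⟩ := exists_le_card_fiber_of_nsmul_le_card_of_maps_to hdist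
    (nonempty_Icc.2 (by norm_num)) (b := (#M : ℝ) / 4) (by simp; linarith)
  set Md := {x ∈ M | H.dist x (f x) = d}
  refine ⟨d, (mem_Icc.1 hd).1, (mem_Icc.1 hd).2, Md.image fun x => (x, f x), ?_, ?_, ?_⟩
  · rw [card_image_of_injective _ fun x y h => congrArg Prod.fst h]
    refine le_trans ?_ hdcard
    rw [div_le_div_iff₀ (by norm_num) (by norm_num)]
    exact_mod_cast (by omega : #X * 4 ≤ #M * 980)
  · simp only [mem_image, Md, mem_filter]
    rintro _ ⟨x, ⟨hxM, rfl⟩, rfl⟩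
    exact (hf x (hMX hxM)).1
  · simp only [coe_image, Md, coe_filter]
    rintro _ ⟨x, hx, rfl⟩ _ ⟨y, hy, rfl⟩ hxy
    exact hpw hx.1 hy.1 fun h => hxy (h ▸ rfl)

end SimpleGraph

section Induced

variable {V : Type*} {G : SimpleGraph V}

lemma inducedDegree_eq_degree (S : Set V) (v : S) [Fintype ((G.induce S).neighborSet v)] :
    inducedDegree G S v = (G.induce S).degree v := by
  rw [inducedDegree, ← card_neighborSet_eq_degree, Set.ncard_eq_toFinset_card', Set.toFinset_card]

lemma card_filter_coe_sort (S : Finset V) (P : V → Prop) [DecidablePred P] :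
    #{v : (S : Set V) | P v} = #{v ∈ S | P v} := by
  rw [← card_map (Function.Embedding.subtype _)]
  congr 1
  ext
  simp [and_comm]

lemma degree_induce_eq_degIn [DecidableRel G.Adj] (S : Finset V) (v : (S : Set V)) :
    (G.induce (S : Set V)).degree v = G.degIn S v := by
  rw [← card_neighborFinset_eq_degree, degIn, ← card_map (Function.Embedding.subtype _)]
  congr 1
  ext w
  simp [mem_neighborFinset, and_comm]

lemma exists_isPath_of_edist_induce_le {S : Set V} {u v : S} {k : ℕ}
    (h : (G.induce S).edist u v ≤ k) :
    ∃ p : G.Walk u v, p.IsPath ∧ p.length ≤ k ∧ ∀ x ∈ p.support, x ∈ S := by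
  have hreach := reachable_of_edist_ne_top (ne_top_of_le_ne_top (by simp) h)
  obtain ⟨p, hp, hlen⟩ := hreach.exists_path_of_dist
  have hpk : p.length ≤ k := by
    rw [hlen, ← ENat.natCast_le_natCast, hreach.coe_dist_eq_edist]
    exact h
  let f := (Embedding.induce (G := G) S).toHom
  refine ⟨p.map f, hp.map (Embedding.induce (G := G) S).injective,
    (Walk.length_map f p).trans_le hpk, fun x hx => ?_⟩
  have hx' : x ∈ (p.map f).support := hx
  rw [Walk.support_map, List.mem_map] at hx'
  obtain ⟨y, -, rfl⟩ := hx'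
  exact y.2

variable [Fintype V]

lemma ncard_onCycleOfLength_induce_le (S : Set V) (ℓ ℓ' : ℕ) :
    {v : S | OnCycleOfLength (G.induce S) ℓ v ∨ OnCycleOfLength (G.induce S) ℓ' v}.ncard ≤
      {v | OnCycleOfLength G ℓ v ∨ OnCycleOfLength G ℓ' v}.ncard := by
  refine Set.ncard_le_ncard_of_injOn Subtype.val (fun v hv => ?_) Subtype.val_injective.injOn
  exact hv.imp (·.map (Embedding.induce S)) (·.map (Embedding.induce S))

variable [DecidableRel G.Adj]

lemma IsCubic.degree_induce_le (hG : IsCubic G) (S : Finset V) (v : (S : Set V)) :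
    (G.induce (S : Set V)).degree v ≤ 3 := by
  rw [degree_induce_eq_degIn, ← hG.degree_eq v]
  exact G.degIn_le_degree S v

variable [DecidableEq V] {S T : Finset V}

lemma IsCubic.card_interedges_le (hG : IsCubic G) (h : IsBisection (S : Set V) T) :
    #(G.interedges S T) ≤ 3 * #{a ∈ S | G.degIn S a ≤ 1} + #{a ∈ S | G.degIn S a = 2} := by
  rw [card_interedges_eq_sum_degIn, card_filter, card_filter, mul_sum, ← sum_add_distrib]
  refine sum_le_sum fun a _ => ?_
  have := hG.degIn_add_degIn h a
  split_ifs <;> omega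

lemma IsCubic.seven_mul_card_interedges_le (hG : IsCubic G) (h : IsBisection (S : Set V) T) :
    7 * #(G.interedges S T) ≤ 21 * #{a ∈ S | G.degIn S a ≤ 1} +
      7 * {v | OnCycleOfLength G 3 v ∨ OnCycleOfLength G 4 v}.ncard + #S +
      7 * #{v : (S : Set V) | (G.induce (S : Set V)).degree v = 2 ∧
        ∃ u ≠ v, (G.induce (S : Set V)).degree u ≠ 3 ∧ (G.induce (S : Set V)).edist v u ≤ 4} := by
  have hcut := hG.card_interedges_le h
  have hdeg := seven_mul_card_degree_eq_two_le (H := G.induce (S : Set V))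
  have hD2 : #{v : (S : Set V) | (G.induce (S : Set V)).degree v = 2} =
      #{a ∈ S | G.degIn S a = 2} := by
    simp only [degree_induce_eq_degIn]
    exact card_filter_coe_sort S (fun a => G.degIn S a = 2)
  have hcyc := ncard_onCycleOfLength_induce_le (G := G) S 3 4
  have hcard : Fintype.card (S : Set V) = #S := by simp
  omega

end Induced

section Sides

variable {V : Type*} [Fintype V] [DecidableEq V] {G : SimpleGraph V} [DecidableRel G.Adj]
  {S T : Finset V}

lemma IsMinimalBisection.card_lowDeg_lt_twenty (hG : IsCubic G) (h : IsMinimalBisection G S T)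
    (hwidth : Fintype.card V ≤ 10 * bisectionWidth G)
    (hcyc : 100 * {v | OnCycleOfLength G 3 v ∨ OnCycleOfLength G 4 v}.ncard ≤ Fintype.card V)
    (hn : 200 ≤ Fintype.card V) : #{a ∈ S | G.degIn S a ≤ 1} < 20 := by
  by_contra! hS
  have hT := h.card_lowDeg_le_one hG (by omega)
  have hcount := hG.seven_mul_card_interedges_le h.1.symm
  have := h.symm.card_interedges_eq
  have := h.1.symm.two_mul_card_eq
  obtain ⟨v, hv⟩ : ({v | (G.induce (T : Set V)).degree v = 2 ∧ ∃ u ≠ v,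
      (G.induce (T : Set V)).degree u ≠ 3 ∧ (G.induce (T : Set V)).edist v u ≤ 4} :
      Finset _).Nonempty := by
    rw [← card_pos]
    omega
  obtain ⟨hv2, u, huv, hu3, hvu⟩ := (mem_filter.1 hv).2
  obtain ⟨p, hp, hlen, hT⟩ := exists_isPath_of_edist_induce_le hvu
  refine (h.card_lowDeg_lt_of_isPath hG hp (fun h => huv (Subtype.ext h).symm) hlen hT ?_ ?_).not_ge
    hS
  · rw [← degree_induce_eq_degIn, hv2]
  · have := hG.degree_induce_le T u
    rw [← degree_induce_eq_degIn]
    omega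

lemma IsMinimalBisection.exists_many_candidates (hG : IsCubic G)
    (h : IsMinimalBisection G S T) (hwidth : Fintype.card V ≤ 10 * bisectionWidth G)
    (hcyc : 100 * {v | OnCycleOfLength G 3 v ∨ OnCycleOfLength G 4 v}.ncard ≤ Fintype.card V)
    (hn : 10 ^ 6 ≤ Fintype.card V) :
    ∃ X : Finset (S : Set V), Fintype.card V ≤ 10 ^ 4 * #X ∧ ∀ v ∈ X,
      (G.induce (S : Set V)).degree v = 2 ∧
      (∃ u ≠ v, (G.induce (S : Set V)).degree u ≠ 3 ∧ (G.induce (S : Set V)).edist v u ≤ 4) ∧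
      ∀ u, (G.induce (S : Set V)).edist v u ≤ 4 → 2 ≤ (G.induce (S : Set V)).degree u := by
  have hL := h.card_lowDeg_lt_twenty hG hwidth hcyc (by omega)
  have hcount := hG.seven_mul_card_interedges_le h.1
  have := h.card_interedges_eq
  have := h.1.two_mul_card_eq
  have hsplit := card_degree_eq_two_near_defect_le (hG.degree_induce_le S)
  have hL' : #{u : (S : Set V) | (G.induce (S : Set V)).degree u ≤ 1} =
      #{a ∈ S | G.degIn S a ≤ 1} := by
    simp only [degree_induce_eq_degIn]
    exact card_filter_coe_sort S (fun a => G.degIn S a ≤ 1)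
  -- At least `n/10 - 57` vertices of `G[S]` have degree two; at most `n/100` of them lie on short
  -- cycles, `n/14` have no other defect nearby and `121 · 19` are near a low-degree vertex.
  refine ⟨({v | (G.induce (S : Set V)).degree v = 2 ∧
    (∃ u ≠ v, (G.induce (S : Set V)).degree u ≠ 3 ∧ (G.induce (S : Set V)).edist v u ≤ 4) ∧
    ∀ u, (G.induce (S : Set V)).edist v u ≤ 4 → 2 ≤ (G.induce (S : Set V)).degree u} : Finset _),
    by omega, fun v hv => by simpa using hv⟩

theorem IsMinimalBisection.hasManyGoodPairs (hG : IsCubic G) (h : IsMinimalBisection G S T)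
    (hwidth : Fintype.card V ≤ 10 * bisectionWidth G)
    (hcyc : 100 * {v | OnCycleOfLength G 3 v ∨ OnCycleOfLength G 4 v}.ncard ≤ Fintype.card V)
    (hn : 10 ^ 6 ≤ Fintype.card V) : HasManyGoodPairs G S (Fintype.card V) := by
  obtain ⟨X, hX, hXgood⟩ := h.exists_many_candidates hG hwidth hcyc hn
  have hΔ := hG.degree_induce_le S
  choose! f hf using fun v hv =>
    exists_isGoodPair hΔ (hXgood v hv).1 (hXgood v hv).2.1 (hXgood v hv).2.2
  obtain ⟨d, hd1, hd4, P, hP, hgood, hdisj⟩ := exists_many_isGoodPair hΔ f hf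
  refine ⟨d, hd1, hd4, P, ?_, fun p hp => ?_,
    fun p hp q hq hpq => Set.disjoint_iff_inter_eq_empty.1 (hdisj hp hq hpq)⟩
  · rw [Set.ncard_coe_finset]
    refine le_trans ?_ hP
    rw [div_le_div_iff₀ (by norm_num) (by norm_num)]
    exact_mod_cast (by omega : Fintype.card V * 980 ≤ _ * 10 ^ 7)
  · simpa only [IsGoodPair, inducedDegree_eq_degree] using hgood p hp

end Sides

lemma Typical.card_le_ten_mul_bisectionWidth {n : ℕ} {G : SimpleGraph (Fin n)} (h : Typical G) :
    n ≤ 10 * bisectionWidth G := by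
  have := h.1
  exact_mod_cast (by linarith : (n : ℝ) ≤ 10 * bisectionWidth G)

/-- Uses `log n ≤ 2 √n ≤ n / 200` for `n ≥ 160000`. -/
lemma Typical.hundred_mul_ncard_onCycleOfLength_le {n : ℕ} {G : SimpleGraph (Fin n)}
    (h : Typical G) (hn : 10 ^ 6 ≤ n) :
    100 * {v | OnCycleOfLength G 3 v ∨ OnCycleOfLength G 4 v}.ncard ≤ n := by
  have hunion : ({v | OnCycleOfLength G 3 v ∨ OnCycleOfLength G 4 v}.ncard : ℝ) ≤
      {v | OnCycleOfLength G 3 v}.ncard + {v | OnCycleOfLength G 4 v}.ncard := by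
    exact_mod_cast Set.ncard_union_le {v | OnCycleOfLength G 3 v} {v | OnCycleOfLength G 4 v}
  have hn' : (10 ^ 6 : ℝ) ≤ n := by exact_mod_cast hn
  have hsqrt : (1000 : ℝ) ≤ √n := Real.le_sqrt_of_sq_le (by linarith)
  have hlog : Real.log n ≤ 2 * √n := by
    have := Real.log_le_sub_one_of_pos (by positivity : 0 < √(n : ℝ))
    rw [Real.log_sqrt (by positivity)] at this
    linarith
  have hsq := Real.sq_sqrt (by positivity : (0 : ℝ) ≤ n)
  suffices 100 * ({v | OnCycleOfLength G 3 v ∨ OnCycleOfLength G 4 v}.ncard : ℝ) ≤ n by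
    exact_mod_cast this
  nlinarith [h.2 3 (by norm_num), h.2 4 (by norm_num)]

/-- For all large enough even `n`: in any typical 3-regular graph on `n` vertices with a
minimal bisection `(V1, V2)`, each side has, for some `d ∈ {1,2,3,4}`, at least `n/10⁷`
pairwise disjoint pairs of degree-two vertices at distance `d` joined by a path of length
`d` whose `d−1` internal vertices all have degree three. -/
theorem statement9 :
    ∃ N : ℕ, ∀ n : ℕ, N ≤ n → Even n →
      ∀ G : SimpleGraph (Fin n), IsCubic G → Typical G →
        ∀ V1 V2 : Set (Fin n), IsMinimalBisection G V1 V2 →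
          HasManyGoodPairs G V1 n ∧ HasManyGoodPairs G V2 n := by
  refine ⟨10 ^ 6, fun n hn _ G hG htyp V1 V2 h => ?_⟩
  classical
  lift V1 to Finset (Fin n) using V1.toFinite
  lift V2 to Finset (Fin n) using V2.toFinite
  have hwidth := htyp.card_le_ten_mul_bisectionWidth
  have hcyc := htyp.hundred_mul_ncard_onCycleOfLength_le hn
  have hside (S T : Finset (Fin n)) (hST : IsMinimalBisection G S T) :
      HasManyGoodPairs G S n := by
    simpa using hST.hasManyGoodPairs hG (by simpa using hwidth) (by simpa using hcyc)
      (by simpa using hn)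
  exact ⟨hside _ _ h, hside _ _ h.symm⟩
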